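/- Every componentwise polymatroidal monomial ideal satisfies the non-pure dual exchange property. -/

import Mathlib

/-- A monomial in `K[x_1,...,x_n]` is identified with its exponent vector. -/
abbrev Mon (n : ℕ) := Fin n → ℕ

/-- Total degree of a monomial. -/
def degree {n : ℕ} (u : Mon n) : ℕ := ∑ i, u i

/-- A monomial ideal is identified with the set of exponent vectors of the monomials it
contains; this set is closed under multiplication by monomials. -/
def IsMonomialIdeal {n : ℕ} (I : Set (Mon n)) : Prop :=
  ∀ u ∈ I, ∀ w : Mon n, u + w ∈ I

/-- The minimal monomial generating set `G(I)` of a monomial ideal: monomials of `I`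
minimal with respect to divisibility (pointwise `≤` of exponent vectors). -/
def minGens {n : ℕ} (I : Set (Mon n)) : Set (Mon n) :=
  {u | u ∈ I ∧ ∀ v ∈ I, v ≤ u → v = u}

/-- `exch v i j` is the exponent vector of `x_j * (v / x_i)` (for `i ≠ j`). -/
def exch {n : ℕ} (v : Mon n) (i j : Fin n) : Mon n :=
  fun k => if k = i then v k - 1 else if k = j then v k + 1 else v k

/-- `component I d` is the ideal `I_⟨d⟩` generated by the degree-`d` monomials of `I`. -/
def component {n : ℕ} (I : Set (Mon n)) (d : ℕ) : Set (Mon n) :=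
  {w | ∃ u ∈ I, degree u = d ∧ u ≤ w}

/-- `I` is generated in a single degree. -/
def GeneratedInSingleDegree {n : ℕ} (I : Set (Mon n)) : Prop :=
  ∃ d, ∀ u ∈ minGens I, degree u = d

/-- A polymatroidal ideal: generated in a single degree and its generators satisfy the
exchange property. -/
def IsPolymatroidal {n : ℕ} (I : Set (Mon n)) : Prop :=
  GeneratedInSingleDegree I ∧
  ∀ u ∈ minGens I, ∀ v ∈ minGens I, ∀ i : Fin n, v i < u i →
    ∃ j : Fin n, u j < v j ∧ exch u i j ∈ I

/-- Componentwise polymatroidal: each graded component ideal `I_⟨d⟩` is polymatroidal. -/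
def ComponentwisePolymatroidal {n : ℕ} (I : Set (Mon n)) : Prop :=
  ∀ d : ℕ, IsPolymatroidal (component I d)

/-- Non-pure dual exchange property: for `u, v ∈ G(I)` with `deg u ≤ deg v` and
`deg_{x_i} v < deg_{x_i} u` there is `j` with `deg_{x_j} v > deg_{x_j} u` and
`x_i * (v / x_j) ∈ I`. -/
def NonPureDualExchange {n : ℕ} (I : Set (Mon n)) : Prop :=
  ∀ u ∈ minGens I, ∀ v ∈ minGens I, degree u ≤ degree v →
    ∀ i : Fin n, v i < u i → ∃ j : Fin n, u j < v j ∧ exch v j i ∈ I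

/-- Non-pure exchange property: for `u, v ∈ G(I)` with `deg u ≤ deg v` and
`deg_{x_i} v > deg_{x_i} u` there is `j` with `deg_{x_j} v < deg_{x_j} u` and
`x_j * (v / x_i) ∈ I`. -/
def NonPureExchange {n : ℕ} (I : Set (Mon n)) : Prop :=
  ∀ u ∈ minGens I, ∀ v ∈ minGens I, degree u ≤ degree v →
    ∀ i : Fin n, u i < v i → ∃ j : Fin n, v j < u j ∧ exch v i j ∈ I

/-- The monomial ideal generated by a set `G` of monomials. -/
def genBy {n : ℕ} (G : Set (Mon n)) : Set (Mon n) := {w | ∃ u ∈ G, u ≤ w}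

/-- The product of two monomial ideals (as sets of monomials). -/
def mulIdeal {n : ℕ} (I J : Set (Mon n)) : Set (Mon n) :=
  {w | ∃ u ∈ I, ∃ v ∈ J, w = u + v}

/-- The product of a monomial ideal with the monomial `u`. -/
def mulMon {n : ℕ} (u : Mon n) (I : Set (Mon n)) : Set (Mon n) :=
  (fun v => u + v) '' I

/-- Strong exchange property: for all generators `u, v` and all `i, j` with
`deg_{x_i} u > deg_{x_i} v` and `deg_{x_j} u < deg_{x_j} v`, `x_j * (u / x_i) ∈ I`. -/
def StrongExchange {n : ℕ} (I : Set (Mon n)) : Prop :=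
  ∀ u ∈ minGens I, ∀ v ∈ minGens I, ∀ i j : Fin n,
    v i < u i → u j < v j → exch u i j ∈ I

/-- The Veronese type ideal `I_{(d; a_1,...,a_n)}`: generated by all monomials of
degree `d` with `deg_{x_i} ≤ a i` for all `i`. -/
def veronese (n d : ℕ) (a : Fin n → ℕ) : Set (Mon n) :=
  {w | ∃ u : Mon n, degree u = d ∧ (∀ i, u i ≤ a i) ∧ u ≤ w}

/-- A list of monomials is an admissible order if each colon ideal
`(u_1,...,u_{i-1}) : u_i` is generated by a subset `S` of the variables. -/
def AdmissibleOrder {n : ℕ} (L : List (Mon n)) : Prop :=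
  ∀ i : Fin L.length, ∃ S : Set (Fin n),
    ∀ w : Mon n, (w + L.get i ∈ genBy {u | u ∈ L.take i.1}) ↔ ∃ k ∈ S, 1 ≤ w k

/-- `I` has linear quotients: some ordering of `G(I)` is admissible. -/
def HasLinearQuotients {n : ℕ} (I : Set (Mon n)) : Prop :=
  ∃ L : List (Mon n), L.Nodup ∧ (∀ u, u ∈ L ↔ u ∈ minGens I) ∧ AdmissibleOrder L

/-- `I` can be extended by linear quotients to `J`: `G(I) ⊆ G(J)` and the elements of
`G(J) \ G(I)` can be ordered `v_1,...,v_m` such that each colon ideal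
`(G(I), v_1,...,v_i) : v_{i+1}` is generated by a subset of the variables. -/
def ExtendsByLinearQuotients {n : ℕ} (I J : Set (Mon n)) : Prop :=
  I ⊆ J ∧ minGens I ⊆ minGens J ∧
  ∃ L : List (Mon n), L.Nodup ∧ (∀ u, u ∈ L ↔ u ∈ minGens J ∧ u ∉ minGens I) ∧
    ∀ i : Fin L.length, ∃ S : Set (Fin n),
      ∀ w : Mon n,
        (w + L.get i ∈ genBy (minGens I ∪ {u | u ∈ L.take i.1})) ↔ ∃ k ∈ S, 1 ≤ w k

/-- The minimal generators of `I ⊆ K[x,y]` are `u_i = x^{a i} y^{b i}`, `i = 0,...,m`,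
with `a` strictly decreasing, `b` strictly increasing, `a m = 0` and `b 0 = 0`
(so `I` is `(x,y)`-primary). -/
def yxTightGens (m : ℕ) (a b : ℕ → ℕ) (I : Set (Mon 2)) : Prop :=
  (∀ i k : ℕ, i ≤ m → k ≤ m → i < k → a k < a i ∧ b i < b k) ∧
  a m = 0 ∧ b 0 = 0 ∧
  minGens I = {u | ∃ i ≤ m, u = ![a i, b i]}

/-- `I` is `x`-tight in `[0, r]`: the `x`-exponents of the generators are exactly
`r, r-1, ..., 1, 0` (i.e. `a (r - i) = i`). -/
def xTight (I : Set (Mon 2)) (r : ℕ) : Prop :=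
  ∃ b : ℕ → ℕ, yxTightGens r (fun i => r - i) b I

/-- `I` is `y`-tight in `[0, s]`: the `y`-exponents of the generators are exactly
`0, 1, ..., s`. -/
def yTight (I : Set (Mon 2)) (s : ℕ) : Prop :=
  ∃ a : ℕ → ℕ, yxTightGens s a (fun i => i) I

/-- `I` is `yx`-tight: there is `0 ≤ j ≤ m` with `b i = i` for `i = 0,...,j` and
`a (m - i) = i` for `i = 0,...,m-j`. -/
def yxTight (I : Set (Mon 2)) : Prop :=
  ∃ (m : ℕ) (a b : ℕ → ℕ), yxTightGens m a b I ∧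
    ∃ j ≤ m, (∀ i ≤ j, b i = i) ∧ ∀ i ≤ m - j, a (m - i) = i

/-- Powers of a monomial ideal. -/
def powIdeal {n : ℕ} (I : Set (Mon n)) : ℕ → Set (Mon n)
  | 0 => Set.univ
  | k + 1 => mulIdeal (powIdeal I k) I

/-! Let `d = deg v` and let `B` be the set of degree-`d` monomials of `I`; these are the minimal
generators of `I_⟨d⟩`, so `B` has the exchange property of a polymatroid. Multiplying `u` by a
power of `x_i` lifts it to `u' ∈ B` with `u'_i > v_i`, and the exchange property on `B` implies the
dual one: by induction on `deg (u' - v)`, exchange `u'` towards `v` at a coordinate other than `i`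
(or at `i`, if `u'_i - v_i ≥ 2`) until `u' = x_i (v / x_j)`. -/

namespace Mon

variable {n : ℕ}

lemma degree_add (u w : Mon n) : degree (u + w) = degree u + degree w :=
  Finset.sum_add_distrib

lemma degree_single (i : Fin n) (c : ℕ) : degree (Pi.single i c : Mon n) = c :=
  Finset.sum_pi_single' i c Finset.univ |>.trans (if_pos (Finset.mem_univ i))

lemma degree_le_degree {u w : Mon n} (h : u ≤ w) : degree u ≤ degree w :=
  Finset.sum_le_sum fun k _ => h k

lemma degree_lt_degree {u w : Mon n} (h : u ≤ w) {k : Fin n} (hk : u k < w k) :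
    degree u < degree w :=
  Finset.sum_lt_sum (fun k _ => h k) ⟨k, Finset.mem_univ k, hk⟩

lemma eq_of_le_of_degree_le {u w : Mon n} (h : u ≤ w) (hd : degree w ≤ degree u) : u = w := by
  by_contra hne
  obtain ⟨k, hk⟩ : ∃ k, u k < w k := by
    by_contra! hall
    exact hne (le_antisymm h hall)
  exact absurd (degree_lt_degree h hk) (not_lt.mpr hd)

lemma exch_apply_left (v : Mon n) (i j : Fin n) : exch v i j i = v i - 1 := if_pos rfl

lemma le_exch_apply (v : Mon n) {i j k : Fin n} (hki : k ≠ i) : v k ≤ exch v i j k := by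
  unfold exch
  split_ifs <;> omega

lemma degree_exch {v : Mon n} {i j : Fin n} (hij : i ≠ j) (hv : 1 ≤ v i) :
    degree (exch v i j) = degree v := by
  have h : exch v i j + Pi.single i 1 = v + Pi.single j 1 := by
    ext k
    simp only [Pi.add_apply, Pi.single_apply, exch]
    split_ifs <;> simp_all
  have := congrArg degree h
  rw [degree_add, degree_add, degree_single, degree_single] at this
  omega

lemma degree_exch_tsub_lt {u v : Mon n} {i j : Fin n} (hi : v i < u i) (hj : u j < v j) :
    degree (exch u i j - v) < degree (u - v) := by
  refine degree_lt_degree (fun k => ?_) (k := i) ?_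
  · simp only [Pi.sub_apply, exch]
    split_ifs <;> subst_vars <;> omega
  · simp only [Pi.sub_apply, exch_apply_left]
    omega

theorem exists_exch_mem_of_exchange {B : Set (Mon n)} {d : ℕ} (hd : ∀ w ∈ B, degree w = d)
    (hex : ∀ u ∈ B, ∀ v ∈ B, ∀ i, v i < u i → ∃ j, u j < v j ∧ exch u i j ∈ B)
    {u v : Mon n} (hu : u ∈ B) (hv : v ∈ B) {i : Fin n} (hi : v i < u i) :
    ∃ j, u j < v j ∧ exch v j i ∈ B := by
  induction hm : degree (u - v) using Nat.strong_induction_on generalizing u with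
  | _ m ih =>
  by_cases hstep : ∃ i', v i' < u i' ∧ (i' = i → v i + 1 < u i)
  · obtain ⟨i', hi'v, hi'i⟩ := hstep
    obtain ⟨j', hj', hmem⟩ := hex u hu v hv i' hi'v
    have hi'' : v i < exch u i' j' i := by
      rcases eq_or_ne i i' with rfl | hii'
      · rw [exch_apply_left]
        have := hi'i rfl
        omega
      · exact hi.trans_le (le_exch_apply u hii')
    obtain ⟨j, hj, hjmem⟩ := ih _ (hm ▸ degree_exch_tsub_lt hi'v hj') hmem hi'' rfl
    have hji' : j ≠ i' := by
      rintro rfl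
      rw [exch_apply_left] at hj
      omega
    exact ⟨j, (le_exch_apply u hji').trans_lt hj, hjmem⟩
  · push Not at hstep
    -- Now `u` exceeds `v` only at `i`, and there by one, so `u = x_i (v / x_j)`.
    obtain ⟨j, hj⟩ : ∃ j, u j < v j := by
      by_contra! hvu
      exact hi.ne (congrFun (eq_of_le_of_degree_le hvu (by rw [hd u hu, hd v hv])) i)
    have hji : j ≠ i := by
      rintro rfl
      omega
    have hle : u ≤ exch v j i := fun k => by
      have := hstep k
      simp only [exch]
      split_ifs <;> subst_vars <;> omega
    have hu_eq := eq_of_le_of_degree_le hle (by rw [degree_exch hji (by omega), hd u hu, hd v hv])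
    exact ⟨j, hj, hu_eq ▸ hu⟩

end Mon

open Mon

lemma mem_of_mem_component {n : ℕ} {I : Set (Mon n)} {d : ℕ} {w : Mon n}
    (hw : w ∈ component I d) (hwd : degree w = d) : w ∈ I := by
  obtain ⟨x, hxI, hxd, hxw⟩ := hw
  rwa [← eq_of_le_of_degree_le hxw (hxd ▸ hwd ▸ le_rfl)]

lemma minGens_component {n : ℕ} (I : Set (Mon n)) (d : ℕ) :
    minGens (component I d) = {w | w ∈ I ∧ degree w = d} := by
  ext w
  constructor
  · rintro ⟨hw, hmin⟩
    obtain ⟨x, hxI, hxd, hxw⟩ := hw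
    obtain rfl := hmin x ⟨x, hxI, hxd, le_rfl⟩ hxw
    exact ⟨hxI, hxd⟩
  · rintro ⟨hwI, hwd⟩
    refine ⟨⟨w, hwI, hwd, le_rfl⟩, fun v ⟨x, _, hxd, hxv⟩ hvw => ?_⟩
    exact eq_of_le_of_degree_le hvw (hwd ▸ hxd ▸ degree_le_degree hxv)

lemma IsPolymatroidal.exchange_of_component {n : ℕ} {I : Set (Mon n)} {d : ℕ}
    (h : IsPolymatroidal (component I d)) :
    ∀ u ∈ {w | w ∈ I ∧ degree w = d}, ∀ v ∈ {w | w ∈ I ∧ degree w = d}, ∀ i, v i < u i →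
      ∃ j, u j < v j ∧ exch u i j ∈ {w | w ∈ I ∧ degree w = d} := by
  intro u hu v hv i hi
  obtain ⟨j, hj, hmem⟩ := h.2 u (minGens_component I d ▸ hu) v (minGens_component I d ▸ hv) i hi
  have hdeg : degree (exch u i j) = d :=
    (degree_exch (by rintro rfl; omega) (by omega)).trans hu.2
  exact ⟨j, hj, mem_of_mem_component hmem hdeg, hdeg⟩

/-- componentwise polymatroidal ideals satisfy the non-pure dual exchange
property. -/
theorem stmt_2 {n : ℕ} (I : Set (Mon n)) (hI : IsMonomialIdeal I)
    (hcp : ComponentwisePolymatroidal I) :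
    NonPureDualExchange I := by
  intro u hu v hv huv i hi
  set u' := u + Pi.single i (degree v - degree u)
  have hu' : u' ∈ {w | w ∈ I ∧ degree w = degree v} := by
    refine ⟨hI u hu.1 _, ?_⟩
    rw [degree_add, degree_single]
    omega
  obtain ⟨j, hj, hmem⟩ := exists_exch_mem_of_exchange (fun w hw => hw.2)
    (hcp (degree v)).exchange_of_component hu' ⟨hv.1, rfl⟩ (hi.trans_le le_self_add)
  exact ⟨j, le_self_add.trans_lt hj, hmem.1⟩
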